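/- arXiv:1605.02324 — 6 statements merged into one kernel-verified Lean document; each statement's English description precedes it below -/
import Mathlib

section
/- For E_s > 0 and σ² > 0, the function γ² ↦ (E_s/(E_s+γ²)²)·(E_s·σ² + γ⁴) defined on [0,∞) attains its minimum uniquely at γ² = σ², and the minimum value equals E_s·σ²/(E_s+σ²). -/
/-! The excess of `Ψ(σ², γ²)` over `E_s σ² / (E_s + σ²)` is the perfect square
`E_s² (γ² - σ²)² / ((E_s + γ²)² (E_s + σ²))`, which vanishes exactly at `γ² = σ²`. -/

theorem mismatchedMSE_sub_eq (Es σ2 γ2 : ℝ) (hγ2 : Es + γ2 ≠ 0) (hσ2 : Es + σ2 ≠ 0) :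
    Es / (Es + γ2) ^ 2 * (Es * σ2 + γ2 ^ 2) - Es * σ2 / (Es + σ2) =
      Es ^ 2 * (γ2 - σ2) ^ 2 / ((Es + γ2) ^ 2 * (Es + σ2)) := by
  field_simp
  ring

/-- Tuning-stage minimization for mismatched LAMA with Gaussian prior:
the function γ² ↦ (E_s/(E_s+γ²)²)·(E_s·σ² + γ⁴) on [0,∞) attains its minimum
uniquely at γ² = σ², with minimum value E_s·σ²/(E_s+σ²). -/
theorem stmt_0 (Es σ2 : ℝ) (hEs : 0 < Es) (hσ2 : 0 < σ2) :
    (Es / (Es + σ2) ^ 2 * (Es * σ2 + σ2 ^ 2) = Es * σ2 / (Es + σ2)) ∧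
    (∀ γ2 : ℝ, 0 ≤ γ2 → γ2 ≠ σ2 →
      Es * σ2 / (Es + σ2) < Es / (Es + γ2) ^ 2 * (Es * σ2 + γ2 ^ 2)) := by
  have hσ2' : 0 < Es + σ2 := by positivity
  constructor
  · rw [← sub_eq_zero, mismatchedMSE_sub_eq Es σ2 σ2 hσ2'.ne' hσ2'.ne']
    simp
  · intro γ2 hγ2 hne
    have hγ2' : 0 < Es + γ2 := by positivity
    have hsq : 0 < (γ2 - σ2) ^ 2 := sq_pos_of_ne_zero (sub_ne_zero.mpr hne)
    rw [← sub_pos, mismatchedMSE_sub_eq Es σ2 γ2 hγ2'.ne' hσ2'.ne']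
    positivity
end

section
/- Let Z be a standard real Gaussian, α > 0, and s₀ ∈ ℝ with |s₀| ≤ α. Define F^α(x) = max(-α, min(α, x)). Then E[(F^α(s₀ + σZ) - s₀)²] ≤ σ², with strict inequality whenever σ > 0. -/
open ProbabilityTheory MeasureTheory

/-!
Clipping to `[-α, α]` is the metric projection onto an interval containing `s₀`, so it
is nonexpansive and fixes `s₀`: pointwise `(F^α(s₀ + σz) - s₀)² ≤ (σz)²`, whose Gaussian
mean is `σ²`. For `σ > 0` the inequality is strict wherever `s₀ + σz > α`, and a Gaussian
charges every nonempty open set.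
-/

section Clip

variable {a b s : ℝ}

theorem abs_max_min_sub_le (has : a ≤ s) (hsb : s ≤ b) (x : ℝ) :
    |max a (min b x) - s| ≤ |x - s| := by
  have hs : max a (min b s) = s := by rw [min_eq_right hsb, max_eq_right has]
  calc |max a (min b x) - s| = |max (min b x) a - max (min b s) a| := by
        rw [max_comm (min b s), hs, max_comm]
    _ ≤ |min b x - min b s| := abs_max_sub_max_le_abs _ _ _
    _ ≤ max |b - b| |x - s| := abs_min_sub_min_le_max _ _ _ _
    _ = |x - s| := by simp

theorem abs_max_min_sub_lt_of_lt (has : a ≤ s) (hsb : s ≤ b) {x : ℝ} (hbx : b < x) :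
    |max a (min b x) - s| < |x - s| := by
  rw [min_eq_left hbx.le, max_eq_right (has.trans hsb), abs_of_nonneg (sub_nonneg.2 hsb),
    abs_of_pos (by linarith)]
  linarith

end Clip

theorem integral_sq_gaussianReal (v : NNReal) : ∫ x, x ^ 2 ∂gaussianReal 0 v = v := by
  rw [← variance_id_gaussianReal (μ := 0) (v := v),
    variance_of_integral_eq_zero aemeasurable_id integral_id_gaussianReal]
  rfl

theorem integrable_sq_gaussianReal (μ : ℝ) (v : NNReal) :
    Integrable (fun x => x ^ 2) (gaussianReal μ v) :=
  (memLp_id_gaussianReal 2).integrable_sq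

theorem isOpenPosMeasure_gaussianReal (μ : ℝ) {v : NNReal} (hv : v ≠ 0) :
    (gaussianReal μ v).IsOpenPosMeasure :=
  (gaussianReal_absolutelyContinuous' μ hv).isOpenPosMeasure

theorem integral_lt_integral_of_continuous_of_le_of_lt {X : Type*} [TopologicalSpace X]
    [MeasurableSpace X] {μ : Measure X} [μ.IsOpenPosMeasure] {f g : X → ℝ}
    (hf : Integrable f μ) (hg : Integrable g μ) (hfc : Continuous f) (hgc : Continuous g)
    (hle : f ≤ g) {x : X} (hlt : f x < g x) : ∫ y, f y ∂μ < ∫ y, g y ∂μ := by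
  have := integral_pos_of_integrable_nonneg_nonzero (hgc.sub hfc) (hg.sub hf)
    (fun y => sub_nonneg.2 (hle y)) (sub_pos.2 hlt).ne'
  rw [Pi.sub_def, integral_sub hg hf] at this
  linarith

theorem stmt_6_general (α s0 σ : ℝ) (hs0 : |s0| ≤ α) :
    (∫ z, (max (-α) (min α (s0 + σ * z)) - s0) ^ 2 ∂(gaussianReal 0 1)) ≤ σ ^ 2 ∧
    (0 < σ →
      (∫ z, (max (-α) (min α (s0 + σ * z)) - s0) ^ 2 ∂(gaussianReal 0 1)) < σ ^ 2) := by
  obtain ⟨hs1, hs2⟩ := abs_le.mp hs0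
  set f : ℝ → ℝ := fun z => (max (-α) (min α (s0 + σ * z)) - s0) ^ 2
  set g : ℝ → ℝ := fun z => (σ * z) ^ 2
  have hfg : f ≤ g := fun z => by
    simpa [g] using sq_le_sq.2 (abs_max_min_sub_le hs1 hs2 (s0 + σ * z))
  have hg : Integrable g (gaussianReal 0 1) := by
    simpa [g, mul_pow] using (integrable_sq_gaussianReal 0 1).const_mul (σ ^ 2)
  have hf : Integrable f (gaussianReal 0 1) :=
    hg.mono' (by fun_prop)
      (.of_forall fun z => (Real.norm_of_nonneg (sq_nonneg _)).trans_le (hfg z))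
  have hg_eq : ∫ z, g z ∂gaussianReal 0 1 = σ ^ 2 := by
    simp [g, mul_pow, integral_const_mul, integral_sq_gaussianReal]
  refine ⟨hg_eq ▸ integral_mono hf hg hfg, fun hσ0 => ?_⟩
  have : (gaussianReal 0 1).IsOpenPosMeasure := isOpenPosMeasure_gaussianReal 0 one_ne_zero
  have hlt : f ((α - s0 + 1) / σ) < g ((α - s0 + 1) / σ) := by
    have hz : σ * ((α - s0 + 1) / σ) = α - s0 + 1 := mul_div_cancel₀ _ hσ0.ne'
    have hclip : α < s0 + (α - s0 + 1) := by linarith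
    simpa [f, g, hz] using sq_lt_sq.2 (abs_max_min_sub_lt_of_lt hs1 hs2 hclip)
  exact hg_eq ▸
    integral_lt_integral_of_continuous_of_le_of_lt hf hg (by fun_prop) (by fun_prop) hfg hlt

/-- Clipping to a box [-α,α] containing the true signal s₀ reduces MSE relative
to the identity: E[(F^α(s₀+σZ)-s₀)²] ≤ σ², strictly when σ > 0. -/
theorem stmt_6 (α s0 σ : ℝ) (hα : 0 < α) (hs0 : |s0| ≤ α) (hσ : 0 ≤ σ) :
    (∫ z, (max (-α) (min α (s0 + σ * z)) - s0) ^ 2 ∂(gaussianReal 0 1)) ≤ σ ^ 2 ∧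
    (0 < σ →
      (∫ z, (max (-α) (min α (s0 + σ * z)) - s0) ^ 2 ∂(gaussianReal 0 1)) < σ ^ 2) :=
  stmt_6_general α s0 σ hs0
end

section
/- Let Z ~ N(0,1), α > 0, a ∈ ℝ, and define Ψ_a(σ²) = E[(F^α(a + σZ) - a)²] where F^α is projection onto [-α,α]. Then Ψ_a(σ²) = σ² + (ᾱ² - σ²)Q(ᾱ/σ) + (α̃² - σ²)Q(α̃/σ) - (σ/√(2π))·ᾱ·e^{-ᾱ²/(2σ²)} - (σ/√(2π))·α̃·e^{-α̃²/(2σ²)}, where ᾱ = α - a, α̃ = α + a, and Q(x) = ∫_x^∞ (1/√(2π)) e^{-u²/2} du, assuming |a| ≤ α and σ > 0. -/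
/-!
Split the line at the two points where `a + σ z` reaches the ends of the clipping interval. On
the outer pieces the error is constant, which produces the Gaussian tail terms; on the middle
piece it is `σ² z²`, and integrating `z² φ(z)` by parts against `φ' = -z φ` produces the
boundary terms `σ c φ(c)` together with further tail terms.
-/

open ProbabilityTheory MeasureTheory Real Set

local notation "φ" => gaussianPDFReal 0 1

lemma gaussianPDFReal_zero_one (u : ℝ) : φ u = 1 / √(2 * π) * exp (-u ^ 2 / 2) := by
  simp [gaussianPDFReal]

lemma gaussianPDFReal_zero_one_neg (u : ℝ) : φ (-u) = φ u := by
  simp [gaussianPDFReal_zero_one]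

lemma continuous_gaussianPDFReal (μ : ℝ) (v : NNReal) : Continuous (gaussianPDFReal μ v) := by
  unfold gaussianPDFReal; fun_prop

lemma hasDerivAt_gaussianPDFReal_zero_one (z : ℝ) : HasDerivAt φ (-z * φ z) z := by
  have h : HasDerivAt (fun u : ℝ ↦ -u ^ 2 / 2) (-z) z := by
    exact ((hasDerivAt_pow 2 z).neg.div_const 2).congr_deriv (by push_cast; ring)
  simp_rw [funext gaussianPDFReal_zero_one]
  exact (h.exp.const_mul _).congr_deriv (by ring)

noncomputable def gaussianTail (x : ℝ) : ℝ := ∫ u in Ioi x, φ u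

lemma integral_Iic_gaussianPDFReal_zero_one (x : ℝ) : ∫ u in Iic x, φ u = gaussianTail (-x) := by
  simp_rw [gaussianTail, ← integral_comp_neg_Iic, gaussianPDFReal_zero_one_neg]

lemma gaussianTail_neg (x : ℝ) : gaussianTail (-x) = 1 - gaussianTail x := by
  rw [← integral_Iic_gaussianPDFReal_zero_one, gaussianTail, eq_sub_iff_add_eq,
    intervalIntegral.integral_Iic_add_Ioi (integrable_gaussianPDFReal 0 1).integrableOn
      (integrable_gaussianPDFReal 0 1).integrableOn, integral_gaussianPDFReal_eq_one 0 one_ne_zero]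

lemma intervalIntegral_gaussianPDFReal_zero_one (a b : ℝ) :
    ∫ u in a..b, φ u = gaussianTail a - gaussianTail b :=
  (intervalIntegral.integral_Ioi_sub_Ioi' (integrable_gaussianPDFReal 0 1).integrableOn
    (integrable_gaussianPDFReal 0 1).integrableOn).symm

lemma intervalIntegral_sq_mul_gaussianPDFReal_zero_one (a b : ℝ) :
    ∫ u in a..b, u ^ 2 * φ u = a * φ a - b * φ b + (gaussianTail a - gaussianTail b) := by
  have hderiv (u : ℝ) : HasDerivAt (fun u ↦ -u * φ u) (u ^ 2 * φ u - φ u) u :=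
    ((hasDerivAt_neg u).mul (hasDerivAt_gaussianPDFReal_zero_one u)).congr_deriv (by ring)
  have hcont := continuous_gaussianPDFReal 0 1
  have hftc := intervalIntegral.integral_eq_sub_of_hasDerivAt (a := a) (b := b) (fun u _ ↦ hderiv u)
    ((by fun_prop : Continuous fun u ↦ u ^ 2 * φ u - φ u).intervalIntegrable _ _)
  rw [intervalIntegral.integral_sub
    ((by fun_prop : Continuous fun u ↦ u ^ 2 * φ u).intervalIntegrable _ _)
    (hcont.intervalIntegrable _ _), intervalIntegral_gaussianPDFReal_zero_one] at hftc
  linarith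

lemma integral_eq_Iic_add_intervalIntegral_add_Ioi {E : Type*} [NormedAddCommGroup E]
    [NormedSpace ℝ E] {μ : Measure ℝ} {f : ℝ → E} (hf : Integrable f μ) (a b : ℝ) :
    ∫ x, f x ∂μ = ∫ x in Iic a, f x ∂μ + ∫ x in a..b, f x ∂μ + ∫ x in Ioi b, f x ∂μ := by
  rw [add_assoc, intervalIntegral.integral_interval_add_Ioi hf.integrableOn hf.integrableOn,
    intervalIntegral.integral_Iic_add_Ioi hf.integrableOn hf.integrableOn]

theorem integral_clip_sub_sq_gaussianReal {lo hi : ℝ} (hlohi : lo ≤ hi) (a : ℝ) {σ : ℝ}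
    (hσ : 0 < σ) :
    ∫ z, (max lo (min hi (a + σ * z)) - a) ^ 2 ∂gaussianReal 0 1 =
      σ ^ 2 + ((a - lo) ^ 2 - σ ^ 2) * gaussianTail ((a - lo) / σ)
        + ((hi - a) ^ 2 - σ ^ 2) * gaussianTail ((hi - a) / σ)
        - σ * (a - lo) * φ ((a - lo) / σ) - σ * (hi - a) * φ ((hi - a) / σ) := by
  set g : ℝ → ℝ := fun z ↦ (max lo (min hi (a + σ * z)) - a) ^ 2
  set c₁ := (lo - a) / σ
  set c₂ := (hi - a) / σ
  have hc : c₁ ≤ c₂ := div_le_div_of_nonneg_right (by linarith) hσ.le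
  have hg_int : Integrable fun z ↦ φ z * g z := by
    refine (integrable_gaussianPDFReal 0 1).mul_bdd (c := (|lo - a| + |hi - a|) ^ 2)
      (by fun_prop) (.of_forall fun z ↦ ?_)
    rw [norm_pow, Real.norm_eq_abs]
    refine pow_le_pow_left₀ (abs_nonneg _) (abs_le.mpr ⟨?_, ?_⟩) 2
    · have := neg_abs_le (lo - a); have := abs_nonneg (hi - a)
      have := le_max_left lo (min hi (a + σ * z)); linarith
    · have := le_abs_self (hi - a); have := abs_nonneg (lo - a)
      have := max_le hlohi (min_le_left hi (a + σ * z)); linarith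
  have h_left : ∫ z in Iic c₁, φ z * g z = (lo - a) ^ 2 * gaussianTail (-c₁) := by
    rw [← integral_Iic_gaussianPDFReal_zero_one, ← integral_const_mul]
    refine setIntegral_congr_fun measurableSet_Iic fun z hz ↦ ?_
    have : a + σ * z ≤ lo := by have := (le_div_iff₀ hσ).mp hz; linarith
    simp only [g, min_eq_right (this.trans hlohi), max_eq_left this, mul_comm]
  have h_mid : ∫ z in c₁..c₂, φ z * g z
      = σ ^ 2 * (c₁ * φ c₁ - c₂ * φ c₂ + (gaussianTail c₁ - gaussianTail c₂)) := by
    rw [← intervalIntegral_sq_mul_gaussianPDFReal_zero_one, ← intervalIntegral.integral_const_mul]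
    refine intervalIntegral.integral_congr fun z hz ↦ ?_
    rw [uIcc_of_le hc] at hz
    have h₁ : lo ≤ a + σ * z := by have := (div_le_iff₀ hσ).mp hz.1; linarith
    have h₂ : a + σ * z ≤ hi := by have := (le_div_iff₀ hσ).mp hz.2; linarith
    simp only [g, min_eq_right h₂, max_eq_right h₁]
    ring
  have h_right : ∫ z in Ioi c₂, φ z * g z = (hi - a) ^ 2 * gaussianTail c₂ := by
    rw [gaussianTail, ← integral_const_mul]
    refine setIntegral_congr_fun measurableSet_Ioi fun z hz ↦ ?_
    have : hi ≤ a + σ * z := by have := (div_lt_iff₀ hσ).mp hz; linarith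
    simp only [g, min_eq_left this, max_eq_right hlohi, mul_comm]
  rw [integral_gaussianReal_eq_integral_smul one_ne_zero]
  simp only [smul_eq_mul]
  rw [integral_eq_Iic_add_intervalIntegral_add_Ioi hg_int c₁ c₂, h_left, h_mid, h_right,
    ← gaussianPDFReal_zero_one_neg c₁, ← neg_neg c₁, gaussianTail_neg (-c₁)]
  have : -c₁ = (a - lo) / σ := by rw [neg_div', neg_sub]
  rw [this, show c₂ = (hi - a) / σ from rfl]
  field_simp
  ring

theorem stmt_7_general (α a σ : ℝ) (hα : 0 < α) (hσ : 0 < σ)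
    (Q : ℝ → ℝ)
    (hQ : ∀ x, Q x = ∫ u in Set.Ioi x, (1 / Real.sqrt (2 * Real.pi)) * Real.exp (-u ^ 2 / 2)) :
    (∫ z, (max (-α) (min α (a + σ * z)) - a) ^ 2 ∂(gaussianReal 0 1)) =
      σ ^ 2 + ((α - a) ^ 2 - σ ^ 2) * Q ((α - a) / σ)
        + ((α + a) ^ 2 - σ ^ 2) * Q ((α + a) / σ)
        - σ / Real.sqrt (2 * Real.pi) * (α - a) * Real.exp (-(α - a) ^ 2 / (2 * σ ^ 2))
        - σ / Real.sqrt (2 * Real.pi) * (α + a) * Real.exp (-(α + a) ^ 2 / (2 * σ ^ 2)) := by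
  have hQ_eq : Q = gaussianTail := funext fun x ↦ by
    simp only [hQ, gaussianTail, gaussianPDFReal_zero_one]
  have hφ (b : ℝ) : φ (b / σ) = 1 / √(2 * π) * exp (-b ^ 2 / (2 * σ ^ 2)) := by
    rw [gaussianPDFReal_zero_one]
    field_simp
  rw [integral_clip_sub_sq_gaussianReal (by linarith : -α ≤ α) a hσ, hQ_eq, sub_neg_eq_add,
    add_comm a α, hφ, hφ]
  ring

/-- Closed form of the per-symbol MSE of the clipping denoiser:
Ψ_a(σ²) = E[(F^α(a+σZ)-a)²] equals the explicit Gaussian-tail expression,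
where Q(x) = ∫_x^∞ (1/√(2π))e^{-u²/2} du, ᾱ = α - a, α̃ = α + a. -/
theorem stmt_7 (α a σ : ℝ) (hα : 0 < α) (ha : |a| ≤ α) (hσ : 0 < σ)
    (Q : ℝ → ℝ)
    (hQ : ∀ x, Q x = ∫ u in Set.Ioi x, (1 / Real.sqrt (2 * Real.pi)) * Real.exp (-u ^ 2 / 2)) :
    (∫ z, (max (-α) (min α (a + σ * z)) - a) ^ 2 ∂(gaussianReal 0 1)) =
      σ ^ 2 + ((α - a) ^ 2 - σ ^ 2) * Q ((α - a) / σ)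
        + ((α + a) ^ 2 - σ ^ 2) * Q ((α + a) / σ)
        - σ / Real.sqrt (2 * Real.pi) * (α - a) * Real.exp (-(α - a) ^ 2 / (2 * σ ^ 2))
        - σ / Real.sqrt (2 * Real.pi) * (α + a) * Real.exp (-(α + a) ^ 2 / (2 * σ ^ 2)) :=
  stmt_7_general α a σ hα hσ Q hQ
end

section
/- Let M ≥ 2 be even, α = M - 1, Z ~ N(0,1), and let S₀ be uniform on the M-PAM constellation {±1, ±3, ..., ±(M-1)}. Define Ψ^PAM(σ²) = E_{S₀,Z}[(F^α(S₀ + σZ) - S₀)²], where F^α is projection onto [-α,α]. Then for all σ² > 0, dΨ^PAM/dσ² ≤ 1 - 1/M, with the supremum 1 - 1/M attained in the limit σ² → 0⁺. -/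
/-!
For a constellation point `s`, put `l = -α - s ≤ 0 ≤ u = α - s`. The clipped error is
`max l (min u (√v Z))`, whose mean square is `u² + T(l, v) - T(u, v)` with
`T(c, v) = E[(c² - v Z²); √v Z ≤ c]` (`tailLoss`). The integrand of `T` vanishes on the moving
boundary `Z = c / √v`, so `∂ᵥ T(c, v) = -E[Z²; Z ≤ c / √v]` and the derivative of the mean
square is `E[Z²; l / √v < Z ≤ u / √v]`. As `E[Z²; Z ≤ x]` lies in `[0, 1]` and equals `1/2` at
`x = 0`, this is at most `H(u) - H(l)`, for the Heaviside step `H` with `H(0) = 1/2`, and tends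
to it as `v → 0⁺`. Over the `M` points, `H(u) - H(l)` is `1` for the `M - 2` inner points and
`1/2` for the two outer ones, which sums to `M - 1`.
-/

open ProbabilityTheory MeasureTheory

namespace ClippedGaussian

open Real Filter Set Topology

lemma hasDerivAt_integral_Iic {E : Type*} [NormedAddCommGroup E] [NormedSpace ℝ E]
    [CompleteSpace E] {f : ℝ → E} (hf : Integrable f) (hc : Continuous f) (x : ℝ) :
    HasDerivAt (fun y => ∫ z in Iic y, f z) (f x) x := by
  have h (y : ℝ) : ∫ z in Iic y, f z = (∫ z in Iic 0, f z) + ∫ z in (0 : ℝ)..y, f z := by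
    rw [← intervalIntegral.integral_Iic_sub_Iic hf.integrableOn hf.integrableOn,
      add_sub_cancel]
  rw [funext h]
  exact (intervalIntegral.integral_hasDerivAt_right hf.intervalIntegrable
    hc.aestronglyMeasurable.stronglyMeasurableAtFilter hc.continuousAt).const_add _

noncomputable def phi : ℝ → ℝ := gaussianPDFReal 0 1

lemma phi_apply (x : ℝ) : phi x = (√(2 * π))⁻¹ * exp (-x ^ 2 / 2) := by
  simp [phi, gaussianPDFReal]

lemma phi_nonneg (x : ℝ) : 0 ≤ phi x := gaussianPDFReal_nonneg 0 1 x

lemma phi_neg (x : ℝ) : phi (-x) = phi x := by simp only [phi_apply, neg_sq]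

lemma continuous_phi : Continuous phi := by
  rw [funext phi_apply]; fun_prop

lemma integrable_phi : Integrable phi := integrable_gaussianPDFReal 0 1

lemma integral_phi : ∫ z, phi z = 1 := integral_gaussianPDFReal_eq_one 0 one_ne_zero

lemma hasDerivAt_phi (x : ℝ) : HasDerivAt phi (-x * phi x) x := by
  have h : HasDerivAt (fun x : ℝ => -x ^ 2 / 2) (-x) x := by
    refine (((hasDerivAt_pow 2 x).neg).div_const 2).congr_deriv ?_
    push_cast; ring
  rw [funext phi_apply]
  exact (h.exp.const_mul _).congr_deriv (by ring)

lemma integrable_sq_mul_phi : Integrable fun z => z ^ 2 * phi z := by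
  have h := (integrable_rpow_mul_exp_neg_mul_sq (b := 2⁻¹) (by norm_num)
    (s := 2) (by norm_num)).const_mul (√(2 * π))⁻¹
  refine h.congr (ae_of_all _ fun z => ?_)
  simp only [phi_apply, rpow_two]
  ring_nf

lemma tendsto_mul_phi_atTop : Tendsto (fun x => x * phi x) atTop (𝓝 0) := by
  have hexp : Tendsto (fun x : ℝ => exp (-(1 / 2) * x)) atTop (𝓝 0) :=
    tendsto_exp_atBot.comp (tendsto_id.const_mul_atTop_of_neg (by norm_num))
  have h := ((rpow_mul_exp_neg_mul_sq_isLittleO_exp_neg (b := 2⁻¹) (by norm_num) 1).isBigO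
    |>.trans_tendsto hexp).const_mul (√(2 * π))⁻¹
  rw [mul_zero] at h
  refine h.congr fun x => ?_
  simp only [phi_apply, rpow_one]
  ring_nf

lemma tendsto_mul_phi_atBot : Tendsto (fun x => x * phi x) atBot (𝓝 0) := by
  have h := (tendsto_mul_phi_atTop.comp tendsto_neg_atBot_atTop).neg
  rw [neg_zero] at h
  refine h.congr fun x => ?_
  simp [phi_neg]

noncomputable def Phi : ℝ → ℝ := cdf (gaussianReal 0 1)

lemma Phi_eq_integral (x : ℝ) : Phi x = ∫ z in Iic x, phi z := by
  rw [Phi, cdf_eq_real, measureReal_def, gaussianReal_apply_eq_integral 0 one_ne_zero,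
    ENNReal.toReal_ofReal (setIntegral_nonneg measurableSet_Iic fun z _ =>
      gaussianPDFReal_nonneg 0 1 z)]
  rfl

lemma hasDerivAt_Phi (x : ℝ) : HasDerivAt Phi (phi x) x := by
  rw [funext Phi_eq_integral]
  exact hasDerivAt_integral_Iic integrable_phi continuous_phi x

lemma Phi_zero : Phi 0 = 1 / 2 := by
  have hsymm : ∫ z in Iic 0, phi z = ∫ z in Ioi 0, phi z := by
    simpa [phi_neg] using integral_comp_neg_Iic 0 phi
  have htotal := setIntegral_union (Iic_disjoint_Ioi (le_refl (0 : ℝ))) measurableSet_Ioi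
    integrable_phi.integrableOn integrable_phi.integrableOn
  rw [Iic_union_Ioi, setIntegral_univ, integral_phi] at htotal
  rw [Phi_eq_integral]
  linarith

noncomputable def truncSecondMoment (x : ℝ) : ℝ := Phi x - x * phi x

lemma hasDerivAt_truncSecondMoment (x : ℝ) :
    HasDerivAt truncSecondMoment (x ^ 2 * phi x) x :=
  ((hasDerivAt_Phi x).sub ((hasDerivAt_id x).mul (hasDerivAt_phi x))).congr_deriv
    (by simp only [id]; ring)

lemma tendsto_truncSecondMoment_atTop : Tendsto truncSecondMoment atTop (𝓝 1) := by
  have h := (tendsto_cdf_atTop (gaussianReal 0 1)).sub tendsto_mul_phi_atTop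
  rwa [sub_zero] at h

lemma tendsto_truncSecondMoment_atBot : Tendsto truncSecondMoment atBot (𝓝 0) := by
  have h := (tendsto_cdf_atBot (gaussianReal 0 1)).sub tendsto_mul_phi_atBot
  rwa [sub_zero] at h

lemma integral_Iic_sq_mul_phi (x : ℝ) : ∫ z in Iic x, z ^ 2 * phi z = truncSecondMoment x := by
  simpa using integral_Iic_of_hasDerivAt_of_tendsto'
    (fun y _ => hasDerivAt_truncSecondMoment y) integrable_sq_mul_phi.integrableOn
    tendsto_truncSecondMoment_atBot

lemma truncSecondMoment_nonneg (x : ℝ) : 0 ≤ truncSecondMoment x := by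
  rw [← integral_Iic_sq_mul_phi]
  exact setIntegral_nonneg measurableSet_Iic fun z _ => by have := phi_nonneg z; positivity

lemma truncSecondMoment_le_one {x : ℝ} (hx : 0 ≤ x) : truncSecondMoment x ≤ 1 := by
  have := cdf_le_one (gaussianReal 0 1) x
  have := mul_nonneg hx (phi_nonneg x)
  rw [truncSecondMoment, Phi]
  linarith

lemma truncSecondMoment_zero : truncSecondMoment 0 = 1 / 2 := by
  simp [truncSecondMoment, Phi_zero]

noncomputable def halfStep (x : ℝ) : ℝ := if 0 < x then 1 else if x = 0 then 1 / 2 else 0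

lemma halfStep_of_eq_zero {x : ℝ} (hx : x = 0) : halfStep x = 1 / 2 := by simp [halfStep, hx]

lemma tendsto_truncSecondMoment_div_sqrt (c : ℝ) :
    Tendsto (fun v => truncSecondMoment (c / √v)) (𝓝[>] 0) (𝓝 (halfStep c)) := by
  have hinv : Tendsto (fun v => √v⁻¹) (𝓝[>] 0) atTop :=
    tendsto_sqrt_atTop.comp tendsto_inv_nhdsGT_zero
  simp_rw [div_eq_mul_inv, ← sqrt_inv]
  rcases lt_trichotomy c 0 with hc | rfl | hc
  · simpa [halfStep, hc.not_gt, hc.ne, Function.comp_def] using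
      tendsto_truncSecondMoment_atBot.comp (hinv.const_mul_atTop_of_neg hc)
  · simp [halfStep, truncSecondMoment_zero]
  · simpa [halfStep, hc, Function.comp_def] using
      tendsto_truncSecondMoment_atTop.comp (hinv.const_mul_atTop hc)

lemma truncSecondMoment_div_sqrt_le_halfStep {c : ℝ} (hc : 0 ≤ c) (v : ℝ) :
    truncSecondMoment (c / √v) ≤ halfStep c := by
  rcases hc.eq_or_lt with rfl | hc
  · simp [halfStep, truncSecondMoment_zero]
  · simpa [halfStep, hc] using truncSecondMoment_le_one (by positivity)

lemma halfStep_le_truncSecondMoment_div_sqrt {c : ℝ} (hc : c ≤ 0) (v : ℝ) :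
    halfStep c ≤ truncSecondMoment (c / √v) := by
  rcases hc.eq_or_lt with rfl | hc
  · simp [halfStep, truncSecondMoment_zero]
  · simpa [halfStep, hc.not_gt, hc.ne] using truncSecondMoment_nonneg _

noncomputable def tailLoss (c v : ℝ) : ℝ :=
  c ^ 2 * Phi (c / √v) - v * truncSecondMoment (c / √v)

lemma hasDerivAt_tailLoss (c : ℝ) {v : ℝ} (hv : 0 < v) :
    HasDerivAt (tailLoss c) (-truncSecondMoment (c / √v)) v := by
  have hx : HasDerivAt (fun w => c / √w) (-(c / √v) / (2 * v)) v := by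
    have hσ : √v ≠ 0 := (sqrt_pos.2 hv).ne'
    refine ((hasDerivAt_const v c).div (hasDerivAt_sqrt hv.ne') hσ).congr_deriv ?_
    rw [sq_sqrt hv.le]
    field_simp
    ring
  have h := (((hasDerivAt_Phi _).comp v hx).const_mul (c ^ 2)).sub
    ((hasDerivAt_id v).mul ((hasDerivAt_truncSecondMoment _).comp v hx))
  have hvx : v * (c / √v) ^ 2 = c ^ 2 := by
    rw [div_pow, sq_sqrt hv.le]; field_simp
  refine h.congr_deriv ?_
  simp only [id, Function.comp_apply]
  linear_combination -(phi (c / √v) * (-(c / √v) / (2 * v))) * hvx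

lemma sq_max_min_mul_eq {l u σ : ℝ} (hlu : l ≤ u) (hσ : 0 < σ) (z : ℝ) :
    max l (min u (σ * z)) ^ 2 =
      u ^ 2 + (Iic (l / σ)).indicator (fun z => l ^ 2 - σ ^ 2 * z ^ 2) z
        - (Iic (u / σ)).indicator (fun z => u ^ 2 - σ ^ 2 * z ^ 2) z := by
  simp only [indicator_apply, mem_Iic, le_div_iff₀' hσ]
  by_cases hzl : σ * z ≤ l
  · simp [hzl, hzl.trans hlu]
  by_cases hzu : σ * z ≤ u
  · simp [hzl, hzu, max_eq_right (not_le.1 hzl).le]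
    ring
  · simp [hzl, hzu, min_eq_left (not_le.1 hzu).le, max_eq_right hlu]

lemma integrable_sq_sub_mul_mul_phi (c v : ℝ) :
    Integrable fun z => (c ^ 2 - v * z ^ 2) * phi z := by
  simp_rw [sub_mul, mul_assoc]
  exact (integrable_phi.const_mul _).sub (integrable_sq_mul_phi.const_mul _)

lemma integral_Iic_sq_sub_mul_mul_phi (c v x : ℝ) :
    ∫ z in Iic x, (c ^ 2 - v * z ^ 2) * phi z = c ^ 2 * Phi x - v * truncSecondMoment x := by
  simp_rw [sub_mul, mul_assoc]
  rw [integral_sub (integrable_phi.const_mul _).integrableOn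
    (integrable_sq_mul_phi.const_mul _).integrableOn, integral_const_mul, integral_const_mul,
    integral_Iic_sq_mul_phi, Phi_eq_integral]

lemma integral_sq_max_min {l u v : ℝ} (hlu : l ≤ u) (hv : 0 < v) :
    ∫ z, max l (min u (√v * z)) ^ 2 ∂gaussianReal 0 1 =
      u ^ 2 + tailLoss l v - tailLoss u v := by
  have hpoint (z : ℝ) : phi z • max l (min u (√v * z)) ^ 2 = u ^ 2 * phi z
      + (Iic (l / √v)).indicator (fun z => (l ^ 2 - v * z ^ 2) * phi z) z
      - (Iic (u / √v)).indicator (fun z => (u ^ 2 - v * z ^ 2) * phi z) z := by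
    rw [sq_max_min_mul_eq hlu (sqrt_pos.2 hv), sq_sqrt hv.le, smul_eq_mul]
    simp only [indicator_apply]
    split_ifs <;> ring
  rw [integral_gaussianReal_eq_integral_smul one_ne_zero]
  change ∫ z, phi z • _ = _
  simp_rw [hpoint]
  have hind (c : ℝ) :=
    (integrable_sq_sub_mul_mul_phi c v).indicator (measurableSet_Iic (a := c / √v))
  rw [integral_sub ((integrable_phi.const_mul _).fun_add (hind l)) (hind u),
    integral_add (integrable_phi.const_mul _) (hind l), integral_indicator measurableSet_Iic,
    integral_indicator measurableSet_Iic, integral_const_mul, integral_phi,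
    integral_Iic_sq_sub_mul_mul_phi, integral_Iic_sq_sub_mul_mul_phi, tailLoss, tailLoss]
  ring

lemma hasDerivAt_integral_clip_sub_sq {α : ℝ} (hα : 0 ≤ α) (s : ℝ) {v : ℝ} (hv : 0 < v) :
    HasDerivAt (fun w => ∫ z, (max (-α) (min α (s + √w * z)) - s) ^ 2 ∂gaussianReal 0 1)
      (truncSecondMoment ((α - s) / √v) - truncSecondMoment ((-α - s) / √v)) v := by
  have heq : (fun w => (α - s) ^ 2 + tailLoss (-α - s) w - tailLoss (α - s) w) =ᶠ[𝓝 v]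
      fun w => ∫ z, (max (-α) (min α (s + √w * z)) - s) ^ 2 ∂gaussianReal 0 1 := by
    filter_upwards [lt_mem_nhds hv] with w hw
    simp_rw [← max_sub_sub_right, ← min_sub_sub_right, add_sub_cancel_left]
    exact (integral_sq_max_min (by linarith) hw).symm
  exact ((((hasDerivAt_tailLoss _ hv).const_add _).sub
    (hasDerivAt_tailLoss _ hv)).congr_of_eventuallyEq heq.symm).congr_deriv (by ring)

lemma sum_halfStep_pam {M : ℕ} (hM : 1 ≤ M) :
    ∑ k ∈ Finset.range M, (halfStep (((M : ℝ) - 1) - (2 * k + 1 - M))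
      - halfStep (-((M : ℝ) - 1) - (2 * k + 1 - M))) = M - 1 := by
  obtain ⟨n, rfl⟩ := Nat.exists_eq_add_of_le' hM
  have hupper (k : ℕ) (hk : k ∈ Finset.range n) :
      halfStep (((n + 1 : ℕ) : ℝ) - 1 - (2 * k + 1 - (n + 1 : ℕ))) = 1 := by
    have : (k : ℝ) + 1 ≤ n := by exact_mod_cast Finset.mem_range.1 hk
    rw [halfStep, if_pos (by push_cast; linarith)]
  have hlower (k : ℕ) :
      halfStep (-(((n + 1 : ℕ) : ℝ) - 1) - (2 * (k + 1 : ℕ) + 1 - (n + 1 : ℕ))) = 0 := by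
    have : (0 : ℝ) ≤ k := k.cast_nonneg
    rw [halfStep, if_neg (by push_cast; linarith), if_neg (by push_cast; linarith)]
  rw [Finset.sum_sub_distrib, Finset.sum_range_succ, Finset.sum_range_succ',
    Finset.sum_congr rfl hupper, Finset.sum_congr rfl fun k _ => hlower k,
    halfStep_of_eq_zero (by push_cast; ring), halfStep_of_eq_zero (by push_cast; ring)]
  simp

end ClippedGaussian

open ClippedGaussian Filter

theorem stmt_11_general (M : ℕ) (hM : 2 ≤ M)
    (Ψ : ℝ → ℝ)
    (hΨ : ∀ v, Ψ v = (1 / (M : ℝ)) * ∑ k ∈ Finset.range M,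
      ∫ z, (max (-(M - 1) : ℝ) (min ((M : ℝ) - 1)
            ((2 * (k : ℝ) + 1 - M) + Real.sqrt v * z)) - (2 * (k : ℝ) + 1 - M)) ^ 2
          ∂(gaussianReal 0 1)) :
    (∀ v : ℝ, 0 < v → deriv Ψ v ≤ 1 - 1 / M) ∧
    Filter.Tendsto (deriv Ψ) (nhdsWithin 0 (Set.Ioi 0)) (nhds (1 - 1 / M)) := by
  have hM1 : (1 : ℝ) ≤ M := by exact_mod_cast (by omega : 1 ≤ M)
  have hderiv : ∀ v > 0, HasDerivAt Ψ ((1 / (M : ℝ)) * ∑ k ∈ Finset.range M,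
      (truncSecondMoment (((M : ℝ) - 1 - (2 * k + 1 - M)) / √v)
        - truncSecondMoment ((-((M : ℝ) - 1) - (2 * k + 1 - M)) / √v))) v := fun v hv => by
    rw [funext hΨ]
    exact (HasDerivAt.fun_sum fun k _ =>
      hasDerivAt_integral_clip_sub_sq (by linarith) _ hv).const_mul _
  have hlimit : (1 / (M : ℝ)) * ∑ k ∈ Finset.range M,
      (halfStep (((M : ℝ) - 1) - (2 * k + 1 - M))
        - halfStep (-((M : ℝ) - 1) - (2 * k + 1 - M))) = 1 - 1 / M := by
    rw [sum_halfStep_pam (by omega)]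
    field_simp
  refine ⟨fun v hv => ?_, ?_⟩
  · rw [(hderiv v hv).deriv, ← hlimit]
    refine mul_le_mul_of_nonneg_left (Finset.sum_le_sum fun k hk => ?_) (by positivity)
    have : (k : ℝ) + 1 ≤ M := by exact_mod_cast Finset.mem_range.1 hk
    have : (0 : ℝ) ≤ k := k.cast_nonneg
    refine sub_le_sub (truncSecondMoment_div_sqrt_le_halfStep ?_ v)
      (halfStep_le_truncSecondMoment_div_sqrt ?_ v) <;> linarith
  · rw [← hlimit]
    refine Tendsto.congr' (eventually_nhdsWithin_of_forall fun v hv => (hderiv v hv).deriv.symm) ?_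
    exact (tendsto_finsetSum _ fun k _ => (tendsto_truncSecondMoment_div_sqrt _).sub
      (tendsto_truncSecondMoment_div_sqrt _)).const_mul _

/-- For S₀ uniform on the M-PAM constellation {±1,±3,…,±(M-1)} (M even, M ≥ 2),
α = M-1, and Ψ^PAM(v) = E_{S₀,Z}[(F^α(S₀+√v·Z)-S₀)²], the derivative of Ψ^PAM
satisfies dΨ/dv ≤ 1 - 1/M for all v > 0, with supremum 1 - 1/M attained as v → 0⁺. -/
theorem stmt_11 (M : ℕ) (hM : 2 ≤ M) (hMeven : Even M)
    (Ψ : ℝ → ℝ)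
    (hΨ : ∀ v, Ψ v = (1 / (M : ℝ)) * ∑ k ∈ Finset.range M,
      ∫ z, (max (-(M - 1) : ℝ) (min ((M : ℝ) - 1)
            ((2 * (k : ℝ) + 1 - M) + Real.sqrt v * z)) - (2 * (k : ℝ) + 1 - M)) ^ 2
          ∂(gaussianReal 0 1)) :
    (∀ v : ℝ, 0 < v → deriv Ψ v ≤ 1 - 1 / M) ∧
    Filter.Tendsto (deriv Ψ) (nhdsWithin 0 (Set.Ioi 0)) (nhds (1 - 1 / M)) :=
  stmt_11_general M hM Ψ hΨ
end

section
/- Let S̃ be uniform on [-α,α], R = S̃ + W with W ~ N(0,τ). Then for each r ∈ ℝ, E[S̃ | R = r] → F^α(r) = max(-α, min(α, r)) as τ → 0⁺. -/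
/-!
On `[-α, α]` the posterior mean is a Gibbs average `∫ s e^{t f(s)} / ∫ e^{t f(s)}` with
`f(s) = -(r - s)²` and inverse temperature `t = 1/(2τ) → ∞`. Since `c = max (-α) (min α r)` is
the projection of `r` onto `[-α, α]`, the angle at `c` is obtuse: `(r - c)² + (c - s)² ≤ (r - s)²`,
so `f` has a strict maximum at `c`. Laplace's principle then makes the normalised weights a family
of peak functions concentrating at `c`: away from any neighbourhood of `c` the weight is at most
`e^{t m₁}`, while its total mass is at least `e^{t m₂}` times the measure of a neighbourhood where
`f > m₂`, for some `m₁ < m₂`.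
-/

open MeasureTheory Filter Set Topology Real

section Laplace

variable {X E : Type*} [TopologicalSpace X] {s : Set X} {f : X → ℝ} {x₀ : X}

theorem IsCompact.exists_lt_forall_le_of_unique_max (hs : IsCompact s) (hf : ContinuousOn f s)
    (h'f : ∀ y ∈ s, y ≠ x₀ → f y < f x₀) {u : Set X} (hu : IsOpen u) (hx₀u : x₀ ∈ u) :
    ∃ m < f x₀, ∀ x ∈ s \ u, f x ≤ m := by
  rcases (s \ u).eq_empty_or_nonempty with h | h
  · exact ⟨f x₀ - 1, by linarith, by simp [h]⟩
  obtain ⟨x, hx, hmax⟩ := (hs.diff hu).exists_isMaxOn h (hf.mono sdiff_subset)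
  exact ⟨f x, h'f x hx.1 fun hxx₀ => hx.2 (hxx₀ ▸ hx₀u), hmax⟩

variable [MeasurableSpace X] {μ : Measure X}

theorem measure_inter_pos_of_mem_closure_interior [μ.IsOpenPosMeasure] {u : Set X}
    (hu : IsOpen u) (hx₀u : x₀ ∈ u) (h₀ : x₀ ∈ closure (interior s)) : 0 < μ (u ∩ s) :=
  ((hu.inter isOpen_interior).measure_pos μ (mem_closure_iff.1 h₀ u hu hx₀u)).trans_le
    (measure_mono (inter_subset_inter_right u interior_subset))

variable [T2Space X] [BorelSpace X] [IsFiniteMeasureOnCompacts μ]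
  [NormedAddCommGroup E] [NormedSpace ℝ E] [CompleteSpace E]

theorem IsCompact.integrableOn_exp_mul (hs : IsCompact s) (hf : ContinuousOn f s) (t : ℝ) :
    IntegrableOn (fun x => exp (t * f x)) s μ :=
  (continuous_exp.comp_continuousOn (continuousOn_const.mul hf)).integrableOn_compact hs

theorem IsCompact.setIntegral_exp_mul_pos (hs : IsCompact s) (hf : ContinuousOn f s)
    (hμs : μ s ≠ 0) (t : ℝ) : 0 < ∫ x in s, exp (t * f x) ∂μ := by
  refine (setIntegral_pos_iff_support_of_nonneg_ae (ae_of_all _ fun x => (exp_pos _).le)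
    (hs.integrableOn_exp_mul hf t)).2 ?_
  simpa [Function.support, exp_ne_zero, pos_iff_ne_zero] using hμs

theorem IsCompact.exp_mul_mul_measureReal_le_setIntegral (hs : IsCompact s)
    (hf : ContinuousOn f s) {t m : ℝ} (ht : 0 ≤ t) {v : Set X} (hv : MeasurableSet v)
    (hvs : v ⊆ s) (hm : ∀ x ∈ v, m ≤ f x) :
    exp (t * m) * μ.real v ≤ ∫ x in s, exp (t * f x) ∂μ :=
  calc exp (t * m) * μ.real v = ∫ _ in v, exp (t * m) ∂μ := by simp [mul_comm]
    _ ≤ ∫ x in v, exp (t * f x) ∂μ :=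
      setIntegral_mono_on (integrableOn_const (measure_mono hvs |>.trans_lt hs.measure_lt_top).ne)
        ((hs.integrableOn_exp_mul hf t).mono_set hvs) hv
        fun x hx => exp_le_exp.2 (mul_le_mul_of_nonneg_left (hm x hx) ht)
    _ ≤ ∫ x in s, exp (t * f x) ∂μ :=
      setIntegral_mono_set (hs.integrableOn_exp_mul hf t)
        (ae_of_all _ fun x => (exp_pos _).le) (ae_of_all _ hvs)

theorem IsCompact.tendstoUniformlyOn_exp_mul_div_setIntegral (hs : IsCompact s)
    (hμ : ∀ u, IsOpen u → x₀ ∈ u → 0 < μ (u ∩ s)) (hf : ContinuousOn f s)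
    (h'f : ∀ y ∈ s, y ≠ x₀ → f y < f x₀) (h₀ : x₀ ∈ s) {u : Set X} (hu : IsOpen u)
    (hx₀u : x₀ ∈ u) :
    TendstoUniformlyOn (fun t x => exp (t * f x) / ∫ y in s, exp (t * f y) ∂μ) 0 atTop
      (s \ u) := by
  obtain ⟨m₁, hm₁, hle⟩ := hs.exists_lt_forall_le_of_unique_max hf h'f hu hx₀u
  obtain ⟨m₂, hm₁₂, hm₂⟩ := exists_between hm₁
  obtain ⟨w, hw, hx₀w, hwf⟩ := _root_.continuousOn_iff.1 hf x₀ h₀ (Ioi m₂) isOpen_Ioi hm₂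
  set V := μ.real (w ∩ s)
  have hV : 0 < V := ENNReal.toReal_pos (hμ w hw hx₀w).ne'
    (measure_mono inter_subset_right |>.trans_lt hs.measure_lt_top).ne
  have hbound : ∀ t, 0 ≤ t → ∀ x ∈ s \ u,
      exp (t * f x) / ∫ y in s, exp (t * f y) ∂μ ≤ V⁻¹ * exp ((m₁ - m₂) * t) := by
    intro t ht x hx
    have hD := hs.exp_mul_mul_measureReal_le_setIntegral (μ := μ) hf ht
      (hw.measurableSet.inter hs.measurableSet) inter_subset_right
      fun y hy => (hwf hy).le
    calc exp (t * f x) / ∫ y in s, exp (t * f y) ∂μ ≤ exp (t * m₁) / (exp (t * m₂) * V) :=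
          div_le_div₀ (exp_pos _).le (exp_le_exp.2 (mul_le_mul_of_nonneg_left (hle x hx) ht))
            (by positivity) hD
      _ = V⁻¹ * exp ((m₁ - m₂) * t) := by
          rw [sub_mul, exp_sub, mul_comm m₁, mul_comm m₂]; field_simp
  have hdecay : Tendsto (fun t => V⁻¹ * exp ((m₁ - m₂) * t)) atTop (𝓝 0) := by
    simpa using (tendsto_exp_atBot.comp
      (tendsto_id.const_mul_atTop_of_neg (sub_neg.2 hm₁₂))).const_mul V⁻¹
  refine Metric.tendstoUniformlyOn_iff.2 fun ε hε => ?_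
  filter_upwards [eventually_ge_atTop 0, (tendsto_order.1 hdecay).2 ε hε] with t ht hsmall x hx
  have hD := hs.setIntegral_exp_mul_pos (μ := μ) hf
    (by simpa using (hμ univ isOpen_univ (mem_univ _)).ne') t
  rw [Pi.zero_apply, dist_zero_left, Real.norm_of_nonneg (by positivity)]
  exact (hbound t ht x hx).trans_lt hsmall

theorem IsCompact.tendsto_setIntegral_exp_mul_smul_of_unique_maximum (hs : IsCompact s)
    (hμ : ∀ u, IsOpen u → x₀ ∈ u → 0 < μ (u ∩ s)) (hf : ContinuousOn f s)
    (h'f : ∀ y ∈ s, y ≠ x₀ → f y < f x₀) (h₀ : x₀ ∈ s) {g : X → E} (hmg : IntegrableOn g s μ)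
    (hcg : ContinuousWithinAt g s x₀) :
    Tendsto (fun t : ℝ => (∫ x in s, exp (t * f x) ∂μ)⁻¹ • ∫ x in s, exp (t * f x) • g x ∂μ)
      atTop (𝓝 (g x₀)) := by
  have hD t : ∫ x in s, exp (t * f x) ∂μ ≠ 0 := (hs.setIntegral_exp_mul_pos hf
    (by simpa using (hμ univ isOpen_univ (mem_univ _)).ne') t).ne'
  have hpeak := tendsto_setIntegral_peak_smul_of_integrableOn_of_tendsto hs.measurableSet
    hs.measurableSet Subset.rfl self_mem_nhdsWithin hs.measure_lt_top.ne
    (φ := fun t x => exp (t * f x) / ∫ y in s, exp (t * f y) ∂μ)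
    (Eventually.of_forall fun t x _ => div_nonneg (exp_pos _).le
      (setIntegral_nonneg hs.measurableSet fun y _ => (exp_pos _).le))
    (fun u hu hx₀u => hs.tendstoUniformlyOn_exp_mul_div_setIntegral hμ hf h'f h₀ hu hx₀u)
    (tendsto_const_nhds.congr fun t => by rw [integral_div, div_self (hD t)])
    (Eventually.of_forall fun t =>
      ((hs.integrableOn_exp_mul hf t).div_const _).aestronglyMeasurable)
    hmg hcg
  refine hpeak.congr fun t => ?_
  simp_rw [div_eq_inv_mul, mul_smul, integral_smul]

end Laplace

theorem sq_sub_max_min_add_sq_le {a b r s : ℝ} (hs : s ∈ Icc a b) :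
    (r - max a (min b r)) ^ 2 + (max a (min b r) - s) ^ 2 ≤ (r - s) ^ 2 := by
  have hangle : 0 ≤ (r - max a (min b r)) * (max a (min b r) - s) := by
    obtain ⟨has, hsb⟩ := hs
    rcases le_total r a with hra | har
    · rw [min_eq_right (hra.trans (has.trans hsb)), max_eq_left hra]
      exact mul_nonneg_of_nonpos_of_nonpos (by linarith) (by linarith)
    rcases le_total b r with hbr | hrb
    · rw [min_eq_left hbr, max_eq_right (has.trans hsb)]
      exact mul_nonneg (by linarith) (by linarith)
    · simp [min_eq_right hrb, max_eq_right har]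
  nlinarith

/-- As τ → 0⁺, the posterior mean of a uniform prior on [-α,α] under Gaussian
noise of variance τ converges pointwise to the projection onto [-α,α]. -/
theorem stmt_17 (α : ℝ) (hα : 0 < α) (r : ℝ) :
    Tendsto (fun τ : ℝ =>
        (∫ s in Set.Icc (-α) α, s * Real.exp (-(r - s) ^ 2 / (2 * τ))) /
          (∫ s in Set.Icc (-α) α, Real.exp (-(r - s) ^ 2 / (2 * τ))))
      (nhdsWithin 0 (Set.Ioi 0)) (nhds (max (-α) (min α r))) := by
  set c := max (-α) (min α r)
  have hc : c ∈ Icc (-α) α := ⟨le_max_left _ _, max_le (by linarith) (min_le_left _ _)⟩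
  have hpeak : ∀ s ∈ Icc (-α) α, s ≠ c → -(r - s) ^ 2 < -(r - c) ^ 2 := fun s hs hsc => by
    have hobtuse := sq_sub_max_min_add_sq_le (r := r) hs
    have hsep : 0 < (c - s) ^ 2 := by positivity [sub_ne_zero.2 hsc.symm]
    linarith
  have hlaplace := isCompact_Icc.tendsto_setIntegral_exp_mul_smul_of_unique_maximum (μ := volume)
    (fun u hu hcu => measure_inter_pos_of_mem_closure_interior hu hcu
      (by rwa [interior_Icc, closure_Ioo (by linarith)]))
    (by fun_prop) hpeak hc (g := id) continuous_id.integrableOn_Icc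
    continuousWithinAt_id
  have hτ : Tendsto (fun τ : ℝ => (2 * τ)⁻¹) (𝓝[>] 0) atTop :=
    (tendsto_inv_nhdsGT_zero.atTop_mul_const (inv_pos.2 two_pos)).congr fun τ => by
      rw [mul_inv, mul_comm]
  refine (hlaplace.comp hτ).congr fun τ => ?_
  simp only [Function.comp_apply, id, smul_eq_mul, ← div_eq_inv_mul, mul_comm (rexp _)]
end

section
/- Let Z ~ N(0,1) and for σ > 0 define Ψ(σ²) = E[(F¹(1 + σZ) - 1)²] with F¹ projection onto [-1,1]. Then Ψ(σ²) = σ²/2 - (2σ/√(2π))·e^{-2/σ²} + (4 - σ²)·Q(2/σ), where Q(x) = ∫_x^∞ (1/√(2π))e^{-u²/2} du. -/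
open ProbabilityTheory MeasureTheory Set
open scoped ENNReal NNReal

lemma aux_deriv_19 (c : ℝ) (z : ℝ) :
    HasDerivAt (fun y : ℝ => -(y * (c * Real.exp (-y^2/2))))
      (z^2 * (c * Real.exp (-z^2/2)) - c * Real.exp (-z^2/2)) z := by
  have h1 : HasDerivAt (fun y : ℝ => -y^2/2) (-z) z := by
    have := (hasDerivAt_pow 2 z).neg.div_const 2
    convert this using 1 <;> first | rfl | (funext y; simp; ring) | (push_cast; ring)
  have h2 := h1.exp.const_mul c
  have h3 := ((hasDerivAt_id z).mul h2).neg
  convert h3 using 1 <;> first | rfl | (funext y; simp) | (simp only [id]; ring)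

set_option maxHeartbeats 800000 in
/-- BPSK specialization of the per-symbol MSE formula:
E[(F¹(1+σZ)-1)²] = σ²/2 - (2σ/√(2π))·e^{-2/σ²} + (4-σ²)·Q(2/σ) for σ > 0. -/
theorem stmt_19 (σ : ℝ) (hσ : 0 < σ)
    (Q : ℝ → ℝ)
    (hQ : ∀ x, Q x = ∫ u in Set.Ioi x, (1 / Real.sqrt (2 * Real.pi)) * Real.exp (-u ^ 2 / 2)) :
    (∫ z, (max (-1 : ℝ) (min 1 (1 + σ * z)) - 1) ^ 2 ∂(gaussianReal 0 1)) =
      σ ^ 2 / 2 - 2 * σ / Real.sqrt (2 * Real.pi) * Real.exp (-2 / σ ^ 2)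
        + (4 - σ ^ 2) * Q (2 / σ) := by
  have hπ : (0:ℝ) < Real.sqrt (2*Real.pi) := Real.sqrt_pos.mpr (by positivity)
  set c : ℝ := (Real.sqrt (2*Real.pi))⁻¹ with hc
  set φ : ℝ → ℝ := fun z => c * Real.exp (-z^2/2) with hφ
  set f : ℝ → ℝ := fun z => (max (-1:ℝ) (min 1 (1+σ*z)) - 1)^2 with hf
  have hc0 : 0 < c := by rw [hc]; positivity
  have ha : (0:ℝ) < 2/σ := by positivity
  have hpdf : gaussianPDFReal 0 1 = φ := by
    ext x; simp [gaussianPDFReal, hφ, hc]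
  have hφint : Integrable φ := hpdf ▸ integrable_gaussianPDFReal 0 1
  have hφcont : Continuous φ := by rw [hφ]; fun_prop
  have hfcont : Continuous f := by rw [hf]; fun_prop
  have hfbd : ∀ z, ‖f z‖ ≤ 4 := by
    intro z
    have h1 : max (-1:ℝ) (min 1 (1+σ*z)) ≤ 1 := max_le (by norm_num) (min_le_left _ _)
    have h2 : (-1:ℝ) ≤ max (-1:ℝ) (min 1 (1+σ*z)) := le_max_left _ _
    show ‖(max (-1:ℝ) (min 1 (1+σ*z)) - 1)^2‖ ≤ 4
    rw [Real.norm_eq_abs, abs_of_nonneg (sq_nonneg _)]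
    nlinarith
  have hint : Integrable (fun z => φ z * f z) := by
    have := hφint.bdd_mul hfcont.aestronglyMeasurable (c := 4) (Filter.Eventually.of_forall hfbd)
    exact this.congr (Filter.Eventually.of_forall fun x => mul_comm _ _)
  -- step 1: density
  have h1 : ∫ z, f z ∂(gaussianReal 0 1) = ∫ z, φ z * f z := by
    rw [gaussianReal_of_var_ne_zero 0 one_ne_zero]
    have hg : (gaussianPDF 0 1) = fun x => ((gaussianPDFReal 0 1 x).toNNReal : ℝ≥0∞) := by
      ext x; simp [gaussianPDF, ENNReal.ofReal]
    rw [hg, integral_withDensity_eq_integral_smul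
      ((measurable_gaussianPDFReal 0 1).real_toNNReal)]
    congr 1; ext x
    rw [NNReal.smul_def, Real.coe_toNNReal _ (gaussianPDFReal_nonneg 0 1 x), hpdf,
      smul_eq_mul]
  have hQval : ∀ b : ℝ, Q b = ∫ u in Set.Ioi b, φ u := by
    intro b; rw [hQ]; congr 1; ext u
    simp only [hφ, hc, one_div]
  have hsymm : ∀ b : ℝ, ∫ z in Set.Iic (-b), φ z = ∫ z in Set.Ioi b, φ z := by
    intro b
    rw [← integral_comp_neg_Ioi]
    congr 1; ext z
    simp only [hφ, neg_sq]
  have htot : ∫ z, φ z = 1 := hpdf ▸ integral_gaussianPDFReal_eq_one 0 one_ne_zero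
  have hsplit0 : (∫ z in Set.Iic (0:ℝ), φ z) + ∫ z in Set.Ioi (0:ℝ), φ z = 1 := by
    rw [← htot, ← integral_add_compl measurableSet_Iic hφint, compl_Iic]
  have hhalf : ∫ z in Set.Iic (0:ℝ), φ z = 1/2 := by
    have h := hsymm 0
    rw [neg_zero] at h
    linarith
  have hIoc : ∫ z in Set.Ioc (-(2/σ)) (0:ℝ), φ z = 1/2 - Q (2/σ) := by
    have hu : Set.Iic (-(2/σ)) ∪ Set.Ioc (-(2/σ)) (0:ℝ) = Set.Iic (0:ℝ) :=
      Set.Iic_union_Ioc_eq_Iic (by linarith)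
    have hd : Disjoint (Set.Iic (-(2/σ))) (Set.Ioc (-(2/σ)) (0:ℝ)) :=
      Set.Iic_disjoint_Ioc le_rfl
    have h := setIntegral_union hd measurableSet_Ioc hφint.integrableOn hφint.integrableOn
      (f := φ) (μ := volume)
    rw [hu, hhalf, hsymm (2/σ), ← hQval] at h
    linarith
  have hsplit : ∫ z, φ z * f z =
      (∫ z in Set.Iic (-(2/σ)), φ z * f z) + (∫ z in Set.Ioc (-(2/σ)) (0:ℝ), φ z * f z)
        + ∫ z in Set.Ioi (0:ℝ), φ z * f z := by
    rw [← integral_add_compl measurableSet_Iic hint, compl_Iic]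
    have hu : Set.Ioc (-(2/σ)) (0:ℝ) ∪ Set.Ioi (0:ℝ) = Set.Ioi (-(2/σ)) :=
      Set.Ioc_union_Ioi_eq_Ioi (by linarith)
    have hd : Disjoint (Set.Ioc (-(2/σ)) (0:ℝ)) (Set.Ioi (0:ℝ)) :=
      Set.Ioc_disjoint_Ioi le_rfl
    have h := setIntegral_union hd measurableSet_Ioi hint.integrableOn hint.integrableOn
      (f := fun z => φ z * f z) (μ := volume)
    rw [hu] at h
    rw [h]; ring
  have hI3 : ∫ z in Set.Ioi (0:ℝ), φ z * f z = 0 := by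
    rw [setIntegral_congr_fun measurableSet_Ioi (g := fun _ => (0:ℝ))]
    · simp
    · intro z hz
      have hz' : (0:ℝ) < z := hz
      have hmin : min (1:ℝ) (1+σ*z) = 1 := min_eq_left (by nlinarith)
      show φ z * (max (-1:ℝ) (min 1 (1+σ*z)) - 1)^2 = 0
      rw [hmin]
      norm_num
  have hI1 : ∫ z in Set.Iic (-(2/σ)), φ z * f z = 4 * Q (2/σ) := by
    have hcong : ∀ z ∈ Set.Iic (-(2/σ)), φ z * f z = φ z * 4 := by
      intro z hz
      have hz' : z ≤ -(2/σ) := hz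
      have hσz : σ * z ≤ -2 := by
        have h := mul_le_mul_of_nonneg_left hz' hσ.le
        rw [mul_neg, mul_div_cancel₀ _ hσ.ne'] at h
        linarith
      have hmin : min (1:ℝ) (1+σ*z) = 1+σ*z := min_eq_right (by linarith)
      have hmax : max (-1:ℝ) (1+σ*z) = -1 := max_eq_left (by linarith)
      show φ z * (max (-1:ℝ) (min 1 (1+σ*z)) - 1)^2 = φ z * 4
      rw [hmin, hmax]
      norm_num
    rw [setIntegral_congr_fun measurableSet_Iic hcong, integral_mul_const,
      hsymm (2/σ), ← hQval]
    ring
  have hI2 : ∫ z in Set.Ioc (-(2/σ)) (0:ℝ), φ z * f z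
      = σ^2 * ((1/2 - Q (2/σ)) - (2/σ) * φ (2/σ)) := by
    have hcong : ∀ z ∈ Set.Ioc (-(2/σ)) (0:ℝ), φ z * f z = σ^2 * (z^2 * φ z) := by
      intro z hz
      obtain ⟨hz1, hz2⟩ := hz
      have hσz1 : -2 < σ * z := by
        have h := (mul_lt_mul_iff_right₀ hσ).mpr hz1
        rw [mul_neg, mul_div_cancel₀ _ hσ.ne'] at h
        linarith
      have hσz2 : σ * z ≤ 0 := mul_nonpos_iff.mpr (Or.inl ⟨hσ.le, hz2⟩)
      have hmin : min (1:ℝ) (1+σ*z) = 1+σ*z := min_eq_right (by linarith)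
      have hmax : max (-1:ℝ) (1+σ*z) = 1+σ*z := max_eq_right (by linarith)
      show φ z * (max (-1:ℝ) (min 1 (1+σ*z)) - 1)^2 = σ^2 * (z^2 * φ z)
      rw [hmin, hmax]
      ring
    rw [setIntegral_congr_fun measurableSet_Ioc hcong, integral_const_mul]
    have hkey : ∫ z in Set.Ioc (-(2/σ)) (0:ℝ), (z^2 * φ z - φ z)
        = -((2/σ) * φ (2/σ)) := by
      have hder : ∀ z ∈ Set.uIcc (-(2/σ)) (0:ℝ),
          HasDerivAt (fun y => -(y * φ y)) (z^2 * φ z - φ z) z := by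
        intro z _
        simpa only [hφ] using aux_deriv_19 c z
      have hii : IntervalIntegrable (fun z => z^2 * φ z - φ z) volume (-(2/σ)) 0 :=
        (((continuous_pow 2).mul hφcont).sub hφcont).intervalIntegrable _ _
      rw [← intervalIntegral.integral_of_le (by linarith : -(2/σ) ≤ (0:ℝ))]
      rw [intervalIntegral.integral_eq_sub_of_hasDerivAt hder hii]
      have : φ (-(2/σ)) = φ (2/σ) := by simp only [hφ, neg_sq]
      rw [this]
      ring
    have hsub : IntegrableOn (fun z => z^2 * φ z) (Set.Ioc (-(2/σ)) (0:ℝ)) :=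
      ((continuous_pow 2).mul hφcont).integrableOn_Ioc
    have h2 : ∫ z in Set.Ioc (-(2/σ)) (0:ℝ), (z^2 * φ z - φ z)
        = (∫ z in Set.Ioc (-(2/σ)) (0:ℝ), z^2 * φ z) - ∫ z in Set.Ioc (-(2/σ)) (0:ℝ), φ z :=
      integral_sub hsub hφint.integrableOn
    rw [h2, hIoc] at hkey
    have : ∫ z in Set.Ioc (-(2/σ)) (0:ℝ), z^2 * φ z
        = (1/2 - Q (2/σ)) - (2/σ) * φ (2/σ) := by linarith
    rw [this]
  rw [h1, hsplit, hI1, hI2, hI3]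
  have hφa : φ (2/σ) = c * Real.exp (-2/σ^2) := by
    simp only [hφ]
    congr 1
    field_simp
  rw [hφa, hc]
  field_simp
  ring
end
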